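/- arXiv:2302.09245 — 2 statements merged into one kernel-verified Lean document; each statement's English description precedes it below -/
import Mathlib

section
/- Let R be a ring and let E and E' be R-modules equipped with opposite filtrations: an ascending chain of submodules 0 = E_0 ⊆ E_1 ⊆ ⋯ ⊆ E_m = E and a descending chain of submodules E' = E'_1 ⊇ E'_2 ⊇ ⋯ ⊇ E'_{m+1} = 0, together with R-module isomorphisms E_i/E_{i-1} ≅ E'_i/E'_{i+1} for all 1 ≤ i ≤ m. If m ≥ 2, E_1 ≠ 0 and E_{m-1} ≠ E, then there exist nonzero R-linear maps h : E → E' and h' : E' → E with h ∘ h' = 0 and h' ∘ h = 0; explicitly, h is the composite E ↠ E/E_{m-1} ≅ E'_m ↪ E' and h' is the composite E' ↠ E'/E'_2 ≅ E_1 ↪ E. -/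
/-!
Only the two extreme graded pieces matter. Since `E_m = E` and `E'_{m+1} = 0`, the top piece
gives `E/E_{m-1} ≅ E'_m`, whence `h : E → E'` with kernel `E_{m-1}` and image `E'_m`; dually
`E'_1 = E'` and `E_0 = 0` turn the bottom piece into `E'/E'_2 ≅ E_1`, whence `h'` with kernel
`E'_2` and image `E_1`. Both composites vanish because `E_1 ⊆ E_{m-1}` and `E'_m ⊆ E'_2`
(here `m ≥ 2` is used), and `h, h'` are nonzero because `E_{m-1} ≠ E` and `E_1 ≠ 0`.
-/

namespace Submodule

variable {R M : Type*} [Ring R] [AddCommGroup M] [Module R M]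

def quotientComapSubtypeEquivOfEqTop {N : Submodule R M} (P : Submodule R M) (hN : N = ⊤) :
    (N ⧸ P.comap N.subtype) ≃ₗ[R] M ⧸ P :=
  Quotient.equiv _ _ (LinearEquiv.ofTop N hN) <| by
    rw [show (LinearEquiv.ofTop N hN : N →ₗ[R] M) = N.subtype from rfl, map_comap_subtype, hN,
      top_inf_eq]

def quotientComapSubtypeEquivOfEqBot (N : Submodule R M) {P : Submodule R M} (hP : P = ⊥) :
    (N ⧸ P.comap N.subtype) ≃ₗ[R] N :=
  quotEquivOfEqBot _ <| by rw [hP, comap_bot, ker_subtype]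

end Submodule

namespace LinearMap

variable {R E E' : Type*} [Ring R] [AddCommGroup E] [Module R E] [AddCommGroup E'] [Module R E']

theorem exists_ker_eq_range_eq_of_quotientEquiv (A : Submodule R E) (B : Submodule R E')
    (e : (E ⧸ A) ≃ₗ[R] B) : ∃ h : E →ₗ[R] E', ker h = A ∧ range h = B := by
  refine ⟨B.subtype ∘ₗ (e : (E ⧸ A) →ₗ[R] B) ∘ₗ A.mkQ, ?_, ?_⟩
  · rw [ker_comp, Submodule.ker_subtype, Submodule.comap_bot, ker_comp, LinearEquiv.ker,
      Submodule.comap_bot, Submodule.ker_mkQ]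
  · rw [range_comp, range_comp, Submodule.range_mkQ, Submodule.map_top, LinearEquiv.range,
      Submodule.map_top, Submodule.range_subtype]

theorem exists_ker_eq_range_eq_of_gradedPieceEquiv {N A : Submodule R E} {B C : Submodule R E'}
    (hN : N = ⊤) (hC : C = ⊥) (e : (N ⧸ A.comap N.subtype) ≃ₗ[R] B ⧸ C.comap B.subtype) :
    ∃ h : E →ₗ[R] E', ker h = A ∧ range h = B :=
  exists_ker_eq_range_eq_of_quotientEquiv A B <|
    (Submodule.quotientComapSubtypeEquivOfEqTop A hN).symm.trans
      (e.trans (B.quotientComapSubtypeEquivOfEqBot hC))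

end LinearMap

/-- Let `R` be a ring and let `E` and `E'` be `R`-modules equipped with
opposite filtrations: an ascending chain of submodules `0 = E_0 ⊆ E_1 ⊆ ⋯ ⊆ E_m = E` and a
descending chain of submodules `E' = E'_1 ⊇ E'_2 ⊇ ⋯ ⊇ E'_{m+1} = 0`, together with
`R`-module isomorphisms `E_i/E_{i-1} ≅ E'_i/E'_{i+1}` for all `1 ≤ i ≤ m`.  If `m ≥ 2`,
`E_1 ≠ 0` and `E_{m-1} ≠ E`, then there exist nonzero `R`-linear maps `h : E → E'` and
`h' : E' → E` with `h ∘ h' = 0` and `h' ∘ h = 0`; explicitly `h` is the composite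
`E ↠ E/E_{m-1} ≅ E'_m ↪ E'` (so `ker h = E_{m-1}` and `range h = E'_m`) and `h'` is the
composite `E' ↠ E'/E'_2 ≅ E_1 ↪ E` (so `ker h' = E'_2` and `range h' = E_1`). -/
theorem opposite_filtrations_exist_nonzero_maps
    {R : Type*} [Ring R] {E E' : Type*}
    [AddCommGroup E] [Module R E] [AddCommGroup E'] [Module R E']
    (m : ℕ) (hm : 2 ≤ m)
    (F : ℕ → Submodule R E) (F' : ℕ → Submodule R E')
    (hFchain : ∀ i, i < m → F i ≤ F (i + 1))
    (hF0 : F 0 = ⊥) (hFtop : F m = ⊤)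
    (hF'chain : ∀ i, 1 ≤ i → i ≤ m → F' (i + 1) ≤ F' i)
    (hF'1 : F' 1 = ⊤) (hF'bot : F' (m + 1) = ⊥)
    (iso : ∀ i, 1 ≤ i → i ≤ m →
      Nonempty ((↥(F i) ⧸ (F (i - 1)).comap (F i).subtype) ≃ₗ[R]
        (↥(F' i) ⧸ (F' (i + 1)).comap (F' i).subtype)))
    (hF1 : F 1 ≠ ⊥) (hFm1 : F (m - 1) ≠ ⊤) :
    ∃ (h : E →ₗ[R] E') (h' : E' →ₗ[R] E),
      h ≠ 0 ∧ h' ≠ 0 ∧ h.comp h' = 0 ∧ h'.comp h = 0 ∧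
      LinearMap.ker h = F (m - 1) ∧ LinearMap.range h = F' m ∧
      LinearMap.ker h' = F' 2 ∧ LinearMap.range h' = F 1 := by
  obtain ⟨eTop⟩ := iso m (by omega) le_rfl
  obtain ⟨eBot⟩ := iso 1 le_rfl (by omega)
  obtain ⟨h, hker, hrange⟩ :=
    LinearMap.exists_ker_eq_range_eq_of_gradedPieceEquiv hFtop hF'bot eTop
  obtain ⟨h', hker', hrange'⟩ :=
    LinearMap.exists_ker_eq_range_eq_of_gradedPieceEquiv hF'1 hF0 eBot.symm
  have hFmono : MonotoneOn F (Set.Iic m) :=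
    monotoneOn_of_le_add_one Set.ordConnected_Iic fun i _ _ hi ↦ hFchain i hi
  have hF'anti : AntitoneOn F' (Set.Icc 1 (m + 1)) :=
    antitoneOn_of_add_one_le Set.ordConnected_Icc fun i _ hi hi' ↦
      hF'chain i hi.1 (by simpa using hi'.2)
  have hF1_le : F 1 ≤ F (m - 1) :=
    hFmono (Set.mem_Iic.2 (by omega)) (Set.mem_Iic.2 (by omega)) (by omega)
  have hF'm_le : F' m ≤ F' 2 :=
    hF'anti (Set.mem_Icc.2 ⟨by omega, by omega⟩) (Set.mem_Icc.2 ⟨by omega, by omega⟩) hm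
  refine ⟨h, h', ?_, ?_, ?_, ?_, hker, hrange, hker', hrange'⟩
  · rwa [Ne, ← LinearMap.ker_eq_top, hker]
  · rwa [Ne, ← LinearMap.range_eq_bot, hrange']
  · rwa [← LinearMap.range_le_ker_iff, hker, hrange']
  · rwa [← LinearMap.range_le_ker_iff, hker', hrange]
end

section
/- Let R be a discrete valuation ring with uniformizer π and fraction field K. Let V be a K-vector space and let E, E' be R-submodules of V whose K-linear spans coincide, and let a, b be natural numbers with π^a·E ⊆ E' and π^b·E' ⊆ E. For i ∈ ℤ define the R-submodule G_i of V by: G_i = E' for i ≤ −b; G_i = π^iE ∩ E' for −b < i < 0; G_i = E ∩ π^{−i}E' for 0 ≤ i < a; and G_i = E for i ≥ a. Then: (1) for every i < 0 one has G_{i+1} ⊆ G_i and π·G_i ⊆ G_{i+1}; (2) for every i ≥ 0 one has G_i ⊆ G_{i+1} and π·G_{i+1} ⊆ G_i; (3) defining x_i : G_i → G_{i+1} to be multiplication by π for i < 0 and the inclusion for i ≥ 0, and y_i : G_{i+1} → G_i to be the inclusion for i < 0 and multiplication by π for i ≥ 0, the composites x_i∘y_i and y_i∘x_i are multiplication by π;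 (4) x_i is bijective for i ≥ a and y_i is bijective for i ≤ −b−1; (5) for every i ∈ ℤ the induced R-linear map G_i/y_i(G_{i+1}) → G_{i+1}/y_{i+1}(G_{i+2}) is injective. -/
open Pointwise

section Defs

variable {R K V : Type*} [CommRing R] [Field K] [Algebra R K]
  [AddCommGroup V] [Module K V] [Module R V] [IsScalarTower R K V]

/-- The image `k • N` of an `R`-submodule `N` of the `K`-vector space `V` under scalar
multiplication by `k : K`; for `k = π^i` with `i : ℤ` this is the submodule `π^i N`
(for negative `i` it equals `{v ∈ V : π^{-i} v ∈ N}`). -/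
noncomputable def smulImage (k : K) (N : Submodule R V) : Submodule R V :=
  N.map ((LinearMap.lsmul K V k).restrictScalars R)

end Defs

section Maps

variable {R V : Type*} [CommRing R] [AddCommGroup V] [Module R V]

/-- The map `x_i`: multiplication by `π` in negative degrees, the inclusion otherwise. -/
def xact (π : R) (i : ℤ) (v : V) : V := if i < 0 then π • v else v

/-- The map `y_i`: the inclusion in negative degrees, multiplication by `π` otherwise. -/
def yact (π : R) (i : ℤ) (v : V) : V := if i < 0 then v else π • v

/-- The image `y_i(G_{i+1}) ⊆ G_i` of the map `y_i : G_{i+1} → G_i`. -/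
noncomputable def yim (π : R) (G : ℤ → Submodule R V) (i : ℤ) : Submodule R V :=
  if i < 0 then G (i + 1) else π • G (i + 1)

end Maps

/-!
With `c` the image of `π` in `K`, every `G i` is the lattice `c^(min i 0) E ⊓ c^(min (-i) 0) E'`:
the inclusions `π^a E ⊆ E'` and `π^b E' ⊆ E` make the constant pieces `E'` and `E` agree with
this formula, and `y_i(G_{i+1})` is then `c^(min i 0 + 1) E ⊓ c^(min (-i) 0) E'`. As
multiplication by `π` is invertible on `V` and shifts both exponents by one, while these lattices
shrink as the exponents grow, every assertion reduces to comparing exponents.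
-/

section Scaling

variable {R K V : Type*} [CommRing R] [Field K] [Algebra R K]
  [AddCommGroup V] [Module K V] [Module R V] [IsScalarTower R K V]

theorem mem_smulImage_iff {k : K} (hk : k ≠ 0) {N : Submodule R V} {v : V} :
    v ∈ smulImage k N ↔ k⁻¹ • v ∈ N := by
  refine ⟨?_, fun h => ⟨k⁻¹ • v, h, by simp [smul_smul, inv_mul_cancel₀ hk]⟩⟩
  rintro ⟨w, hw, rfl⟩
  simpa [smul_smul, inv_mul_cancel₀ hk] using hw

theorem mem_smulImage_zpow_iff {c : K} (hc : c ≠ 0) {N : Submodule R V} {k : ℤ} {v : V} :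
    v ∈ smulImage (c ^ k) N ↔ c ^ (-k) • v ∈ N := by
  rw [mem_smulImage_iff (zpow_ne_zero k hc), zpow_neg]

theorem smulImage_zpow_zero (c : K) (N : Submodule R V) : smulImage (c ^ (0 : ℤ)) N = N := by
  ext v
  simp [smulImage]

variable {π : R}

theorem pow_smul_eq_algebraMap_zpow_smul (n : ℕ) (v : V) :
    π ^ n • v = algebraMap R K π ^ (n : ℤ) • v := by
  rw [zpow_natCast, ← map_pow, algebraMap_smul]

theorem smulImage_zpow_antitone (hπ : algebraMap R K π ≠ 0) (N : Submodule R V) :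
    Antitone fun k : ℤ => smulImage (algebraMap R K π ^ k) N := by
  intro k k' hk v hv
  obtain ⟨n, rfl⟩ := Int.le.dest hk
  rw [mem_smulImage_zpow_iff hπ] at hv ⊢
  convert N.smul_mem (π ^ n) hv using 1
  rw [pow_smul_eq_algebraMap_zpow_smul (K := K), smul_smul, ← zpow_add₀ hπ]
  congr 2
  ring

theorem smul_mem_smulImage_zpow_add_one_iff (hπ : algebraMap R K π ≠ 0) {N : Submodule R V}
    {k : ℤ} {v : V} :
    π • v ∈ smulImage (algebraMap R K π ^ (k + 1)) N ↔ v ∈ smulImage (algebraMap R K π ^ k) N := by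
  rw [mem_smulImage_zpow_iff hπ, mem_smulImage_zpow_iff hπ, ← algebraMap_smul K π v, smul_smul,
    ← zpow_add_one₀ hπ, neg_add, neg_add_cancel_right]

theorem le_smulImage_zpow_neg_iff (hπ : algebraMap R K π ≠ 0) {N N' : Submodule R V} (n : ℕ) :
    N' ≤ smulImage (algebraMap R K π ^ (-(n : ℤ))) N ↔ ∀ x ∈ N', π ^ n • x ∈ N := by
  simp only [SetLike.le_def, mem_smulImage_zpow_iff hπ, neg_neg,
    pow_smul_eq_algebraMap_zpow_smul (K := K)]

end Scaling

section Interpolation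

variable {R K V : Type*} [CommRing R] [Field K] [Algebra R K]
  [AddCommGroup V] [Module K V] [Module R V] [IsScalarTower R K V]
  {π : R} {E E' : Submodule R V}

variable (K) in
noncomputable def scaledInf (π : R) (E E' : Submodule R V) (k l : ℤ) : Submodule R V :=
  smulImage (algebraMap R K π ^ k) E ⊓ smulImage (algebraMap R K π ^ l) E'

theorem scaledInf_anti (hπ : algebraMap R K π ≠ 0) {k k' l l' : ℤ} (hk : k ≤ k') (hl : l ≤ l') :
    scaledInf K π E E' k' l' ≤ scaledInf K π E E' k l :=
  inf_le_inf (smulImage_zpow_antitone hπ E hk) (smulImage_zpow_antitone hπ E' hl)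

theorem smul_mem_scaledInf_add_one_iff (hπ : algebraMap R K π ≠ 0) {k l : ℤ} {v : V} :
    π • v ∈ scaledInf K π E E' (k + 1) (l + 1) ↔ v ∈ scaledInf K π E E' k l := by
  simp only [scaledInf, Submodule.mem_inf, smul_mem_smulImage_zpow_add_one_iff hπ]

theorem smul_scaledInf (hπ : algebraMap R K π ≠ 0) (k l : ℤ) :
    π • scaledInf K π E E' k l = scaledInf K π E E' (k + 1) (l + 1) := by
  ext w
  rw [Submodule.mem_smul_pointwise_iff_exists]
  refine ⟨fun ⟨v, hv, hvw⟩ => hvw ▸ (smul_mem_scaledInf_add_one_iff hπ).2 hv, fun hw => ?_⟩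
  have hπw : π • (algebraMap R K π)⁻¹ • w = w := by
    rw [← algebraMap_smul K π, smul_inv_smul₀ hπ]
  exact ⟨_, (smul_mem_scaledInf_add_one_iff hπ).1 (by rwa [hπw]), hπw⟩

variable (K) in
noncomputable def interpolatingFamily (π : R) (E E' : Submodule R V) (i : ℤ) : Submodule R V :=
  scaledInf K π E E' (min i 0) (min (-i) 0)

theorem eq_interpolatingFamily (hπ : algebraMap R K π ≠ 0) {a b : ℕ}
    (ha : E ≤ smulImage (algebraMap R K π ^ (-(a : ℤ))) E')
    (hb : E' ≤ smulImage (algebraMap R K π ^ (-(b : ℤ))) E) {G : ℤ → Submodule R V}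
    (hG₁ : ∀ i : ℤ, i ≤ -(b : ℤ) → G i = E')
    (hG₂ : ∀ i : ℤ, -(b : ℤ) < i → i < 0 →
      G i = smulImage ((algebraMap R K π) ^ i) E ⊓ E')
    (hG₃ : ∀ i : ℤ, 0 ≤ i → i < (a : ℤ) →
      G i = E ⊓ smulImage ((algebraMap R K π) ^ (-i)) E')
    (hG₄ : ∀ i : ℤ, (a : ℤ) ≤ i → G i = E) :
    G = interpolatingFamily K π E E' := by
  funext i
  obtain h | h | h | h : i ≤ -(b : ℤ) ∨ (-(b : ℤ) < i ∧ i < 0) ∨ (0 ≤ i ∧ i < a) ∨ a ≤ i := by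
    omega
  · rw [hG₁ i h, interpolatingFamily, scaledInf, min_eq_left (by omega), min_eq_right (by omega),
      smulImage_zpow_zero, right_eq_inf]
    exact hb.trans (smulImage_zpow_antitone hπ E (by omega))
  · rw [hG₂ i h.1 h.2, interpolatingFamily, scaledInf, min_eq_left (by omega),
      min_eq_right (by omega), smulImage_zpow_zero]
  · rw [hG₃ i h.1 h.2, interpolatingFamily, scaledInf, min_eq_right (by omega),
      min_eq_left (by omega), smulImage_zpow_zero]
  · rw [hG₄ i h, interpolatingFamily, scaledInf, min_eq_right (by omega), min_eq_left (by omega),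
      smulImage_zpow_zero, left_eq_inf]
    exact ha.trans (smulImage_zpow_antitone hπ E' (by omega))

theorem yact_mem_interpolatingFamily (hπ : algebraMap R K π ≠ 0) {i : ℤ} {v : V}
    (hv : v ∈ interpolatingFamily K π E E' (i + 1)) :
    yact π i v ∈ interpolatingFamily K π E E' i := by
  unfold yact
  split_ifs with hi
  · exact scaledInf_anti hπ (by omega) (by omega) hv
  · exact scaledInf_anti hπ (by omega) (by omega) ((smul_mem_scaledInf_add_one_iff hπ).2 hv)

theorem xact_mem_interpolatingFamily (hπ : algebraMap R K π ≠ 0) {i : ℤ} {v : V}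
    (hv : v ∈ interpolatingFamily K π E E' i) :
    xact π i v ∈ interpolatingFamily K π E E' (i + 1) := by
  unfold xact
  split_ifs with hi
  · exact scaledInf_anti hπ (by omega) (by omega) ((smul_mem_scaledInf_add_one_iff hπ).2 hv)
  · exact scaledInf_anti hπ (by omega) (by omega) hv

theorem yim_interpolatingFamily (hπ : algebraMap R K π ≠ 0) (i : ℤ) :
    yim π (interpolatingFamily K π E E') i = scaledInf K π E E' (min i 0 + 1) (min (-i) 0) := by
  unfold yim interpolatingFamily
  split_ifs with hi
  · congr 1 <;> omega
  · rw [smul_scaledInf hπ]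
    congr 1 <;> omega

theorem mem_yim_of_xact_mem_yim (hπ : algebraMap R K π ≠ 0) {i : ℤ} {v : V}
    (hv : v ∈ interpolatingFamily K π E E' i)
    (h : xact π i v ∈ yim π (interpolatingFamily K π E E') (i + 1)) :
    v ∈ yim π (interpolatingFamily K π E E') i := by
  rw [yim_interpolatingFamily hπ] at h ⊢
  refine ⟨?_, hv.2⟩
  unfold xact at h
  split_ifs at h with hi
  · exact smulImage_zpow_antitone hπ E (by omega) ((smul_mem_smulImage_zpow_add_one_iff hπ).1 h.1)
  · exact smulImage_zpow_antitone hπ E (by omega) h.1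

end Interpolation

section Maps

variable {R V : Type*} [CommRing R] [AddCommGroup V] [Module R V]

theorem xact_eq_id (π : R) {i : ℤ} (hi : 0 ≤ i) : (xact π i : V → V) = id :=
  funext fun _ => if_neg (not_lt.2 hi)

theorem yact_eq_id (π : R) {i : ℤ} (hi : i < 0) : (yact π i : V → V) = id :=
  funext fun _ => if_pos hi

theorem xact_yact (π : R) (i : ℤ) (v : V) : xact π i (yact π i v) = π • v := by
  unfold xact yact
  split_ifs <;> rfl

theorem yact_xact (π : R) (i : ℤ) (v : V) : yact π i (xact π i v) = π • v := by
  unfold xact yact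
  split_ifs <;> rfl

end Maps

theorem interpolating_family_properties_general
    {R : Type*} [CommRing R]
    {K : Type*} [Field K] [Algebra R K] [IsFractionRing R K]
    {V : Type*} [AddCommGroup V] [Module K V] [Module R V] [IsScalarTower R K V]
    (π : R) (hπ : Irreducible π)
    (E E' : Submodule R V)
    (a b : ℕ)
    (ha : ∀ x ∈ E, π ^ a • x ∈ E')
    (hb : ∀ x ∈ E', π ^ b • x ∈ E)
    (G : ℤ → Submodule R V)
    (hG₁ : ∀ i : ℤ, i ≤ -(b : ℤ) → G i = E')
    (hG₂ : ∀ i : ℤ, -(b : ℤ) < i → i < 0 →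
      G i = smulImage ((algebraMap R K π) ^ i) E ⊓ E')
    (hG₃ : ∀ i : ℤ, 0 ≤ i → i < (a : ℤ) →
      G i = E ⊓ smulImage ((algebraMap R K π) ^ (-i)) E')
    (hG₄ : ∀ i : ℤ, (a : ℤ) ≤ i → G i = E) :
    (∀ i : ℤ, ∀ x ∈ G (i + 1), yact π i x ∈ G i) ∧
    (∀ i : ℤ, ∀ x ∈ G i, xact π i x ∈ G (i + 1)) ∧
    (∀ (i : ℤ) (v : V), xact π i (yact π i v) = π • v ∧ yact π i (xact π i v) = π • v) ∧
    (∀ i : ℤ, (a : ℤ) ≤ i → Set.BijOn (xact π i) (G i : Set V) (G (i + 1) : Set V)) ∧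
    (∀ i : ℤ, i ≤ -(b : ℤ) - 1 → Set.BijOn (yact π i) (G (i + 1) : Set V) (G i : Set V)) ∧
    (∀ i : ℤ, ∀ x ∈ G i, xact π i x ∈ yim π G (i + 1) → x ∈ yim π G i) := by
  have hπ' : algebraMap R K π ≠ 0 :=
    (map_ne_zero_iff _ (IsFractionRing.injective R K)).2 hπ.ne_zero
  obtain rfl : G = interpolatingFamily K π E E' :=
    eq_interpolatingFamily hπ' ((le_smulImage_zpow_neg_iff hπ' a).2 ha)
      ((le_smulImage_zpow_neg_iff hπ' b).2 hb) hG₁ hG₂ hG₃ hG₄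
  refine ⟨fun i x => yact_mem_interpolatingFamily hπ', fun i x => xact_mem_interpolatingFamily hπ',
    fun i v => ⟨xact_yact π i v, yact_xact π i v⟩, fun i hi => ?_, fun i hi => ?_,
    fun i x => mem_yim_of_xact_mem_yim hπ'⟩
  · rw [xact_eq_id π (by omega), hG₄ i hi, hG₄ (i + 1) (by omega)]
    exact Set.bijOn_id _
  · rw [yact_eq_id π (by omega), hG₁ i (by omega), hG₁ (i + 1) (by omega)]
    exact Set.bijOn_id _

/-- Let `R` be a DVR with uniformizer `π` and fraction field `K`, `V` a
`K`-vector space, and `E, E'` `R`-submodules of `V` with the same `K`-span, with `π^a E ⊆ E'`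
and `π^b E' ⊆ E`.  Define `G_i = E'` for `i ≤ -b`, `G_i = π^i E ∩ E'` for `-b < i < 0`,
`G_i = E ∩ π^{-i} E'` for `0 ≤ i < a`, and `G_i = E` for `i ≥ a`.  Then:
(1) for `i < 0`, `G_{i+1} ⊆ G_i` and `π G_i ⊆ G_{i+1}`;
(2) for `i ≥ 0`, `G_i ⊆ G_{i+1}` and `π G_{i+1} ⊆ G_i`
    (together: `y_i` maps `G_{i+1}` into `G_i` and `x_i` maps `G_i` into `G_{i+1}`);
(3) the composites `x_i ∘ y_i` and `y_i ∘ x_i` are multiplication by `π`;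
(4) `x_i : G_i → G_{i+1}` is bijective for `i ≥ a` and `y_i : G_{i+1} → G_i` is bijective
    for `i ≤ -b - 1`;
(5) for every `i` the induced map `G_i / y_i(G_{i+1}) → G_{i+1} / y_{i+1}(G_{i+2})`
    (given by `x_i`) is injective, i.e. if `x ∈ G_i` and `x_i x ∈ y_{i+1}(G_{i+2})` then
    `x ∈ y_i(G_{i+1})`. -/
theorem interpolating_family_properties
    {R : Type*} [CommRing R] [IsDomain R] [IsDiscreteValuationRing R]
    {K : Type*} [Field K] [Algebra R K] [IsFractionRing R K]
    {V : Type*} [AddCommGroup V] [Module K V] [Module R V] [IsScalarTower R K V]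
    (π : R) (hπ : Irreducible π)
    (E E' : Submodule R V)
    (hspan : Submodule.span K (E : Set V) = Submodule.span K (E' : Set V))
    (a b : ℕ)
    (ha : ∀ x ∈ E, π ^ a • x ∈ E')
    (hb : ∀ x ∈ E', π ^ b • x ∈ E)
    (G : ℤ → Submodule R V)
    (hG₁ : ∀ i : ℤ, i ≤ -(b : ℤ) → G i = E')
    (hG₂ : ∀ i : ℤ, -(b : ℤ) < i → i < 0 →
      G i = smulImage ((algebraMap R K π) ^ i) E ⊓ E')
    (hG₃ : ∀ i : ℤ, 0 ≤ i → i < (a : ℤ) →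
      G i = E ⊓ smulImage ((algebraMap R K π) ^ (-i)) E')
    (hG₄ : ∀ i : ℤ, (a : ℤ) ≤ i → G i = E) :
    (∀ i : ℤ, ∀ x ∈ G (i + 1), yact π i x ∈ G i) ∧
    (∀ i : ℤ, ∀ x ∈ G i, xact π i x ∈ G (i + 1)) ∧
    (∀ (i : ℤ) (v : V), xact π i (yact π i v) = π • v ∧ yact π i (xact π i v) = π • v) ∧
    (∀ i : ℤ, (a : ℤ) ≤ i → Set.BijOn (xact π i) (G i : Set V) (G (i + 1) : Set V)) ∧
    (∀ i : ℤ, i ≤ -(b : ℤ) - 1 → Set.BijOn (yact π i) (G (i + 1) : Set V) (G i : Set V)) ∧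
    (∀ i : ℤ, ∀ x ∈ G i, xact π i x ∈ yim π G (i + 1) → x ∈ yim π G i) :=
  interpolating_family_properties_general π hπ E E' a b ha hb G hG₁ hG₂ hG₃ hG₄
end
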